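/- If a delayed formula χ of HML_srbb distinguishes a process p from a nonempty set Q (with respect to ⟦·⟧^ε) and Q is closed under silent steps (Q ↠ Q), then expr^ε(χ) ∈ Win_a([p,Q]^ε_a) in the weak spectroscopy energy game G△. -/

import Mathlib

open Classical

noncomputable section

namespace Spectroscopy

/-! ### Energies and declining energy games -/

/-- Energies: 8-dimensional vectors over `ℕ ∪ {∞}`, ordered componentwise. -/
abbrev Energy : Type := Fin 8 → ℕ∞

/-- The `i`-th unit vector. -/
def unitE (i : Fin 8) : Energy := fun k => if k = i then 1 else 0

/-- The vector with value `v` at position `i` and `0` elsewhere. -/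
def onlyAt (i : Fin 8) (v : ℕ∞) : Energy := fun k => if k = i then v else 0

/-- Components of energy updates: `-1`, `0`, or minimum selection `min_D`.
For the component at position `k`, `minWith D` selects the minimum over the
positions `{k} ∪ D`, so the requirement `k ∈ D` of the paper holds by
construction. -/
inductive UpdComp : Type
  | decr : UpdComp
  | zero : UpdComp
  | minWith (D : Finset (Fin 8)) : UpdComp
deriving DecidableEq

/-- Energy updates. -/
abbrev Update : Type := Fin 8 → UpdComp

/-- Partial application of an update to an energy (`none` when a component
would become negative). -/
def upd (e : Energy) (u : Update) : Option Energy :=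
  if ∀ k, u k = UpdComp.decr → e k ≠ 0 then
    some (fun k =>
      match u k with
      | UpdComp.decr => e k - 1
      | UpdComp.zero => e k
      | UpdComp.minWith D => (insert k D).inf e)
  else none

/-- A declining energy game: positions, a defender predicate (attacker
positions are the non-defender ones), and moves labeled with updates. -/
structure EGame (Pos : Type) where
  defender : Pos → Prop
  move : Pos → Update → Pos → Prop

/-- Attacker winning budgets `Win_a`: at an attacker position some move must
lead to an attacker-won position under the updated energy; at a defender
position every move must (be defined and) lead to an attacker-won position. -/
inductive EGame.Win {Pos : Type} (G : EGame Pos) : Pos → Energy → Prop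
  | attack {g : Pos} {u : Update} {g' : Pos} {e e' : Energy} :
      ¬ G.defender g → G.move g u g' → upd e u = some e' → G.Win g' e' →
      G.Win g e
  | defend {g : Pos} {e : Energy} :
      G.defender g →
      (∀ u g', G.move g u g' → upd e u ≠ none) →
      (∀ u g' e', G.move g u g' → upd e u = some e' → G.Win g' e') →
      G.Win g e

/-! ### Labeled transition systems with silent steps -/

section LTS

variable {Proc Act : Type}

/-- Weak internal steps `↠`: reflexive-transitive closure of `τ`-steps. -/
def Star (Tr : Proc → Act → Proc → Prop) (τ : Act) : Proc → Proc → Prop :=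
  Relation.ReflTransGen fun p p' => Tr p τ p'

/-- A process is stable if it has no `τ`-step. -/
def Stable (Tr : Proc → Act → Proc → Prop) (τ : Act) (p : Proc) : Prop :=
  ∀ p', ¬ Tr p τ p'

/-- Optional step `p →(α) p'`: a real `α`-step, or `α = τ` and `p = p'`. -/
def OptStep (Tr : Proc → Act → Proc → Prop) (τ : Act) (p : Proc) (α : Act) (p' : Proc) : Prop :=
  Tr p α p' ∨ (α = τ ∧ p = p')

/-- Lift of `→a` to sets. -/
def SetStep (Tr : Proc → Act → Proc → Prop) (Q : Set Proc) (a : Act) (Q' : Set Proc) : Prop :=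
  Q' = {q' | ∃ q ∈ Q, Tr q a q'}

/-- Lift of `↠` to sets. -/
def SetStar (Tr : Proc → Act → Proc → Prop) (τ : Act) (Q Q' : Set Proc) : Prop :=
  Q' = {q' | ∃ q ∈ Q, Star Tr τ q q'}

/-- Lift of `→(α)` to sets. -/
def SetOpt (Tr : Proc → Act → Proc → Prop) (τ : Act) (Q : Set Proc) (α : Act)
    (Q' : Set Proc) : Prop :=
  Q' = {q' | ∃ q ∈ Q, OptStep Tr τ q α q'}

end LTS

/-! ### The logic HML_srbb -/

mutual
/-- Formulas `φ` of HML_srbb: `⟨ε⟩χ` or immediate conjunctions `⋀Ψ`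
(conjunctions are indexed by an arbitrary type). `⊤` is the empty conjunction. -/
inductive Formula (Act : Type) (τ : Act) : Type 1
  | delayed : DFormula Act τ → Formula Act τ
  | conj : (I : Type) → (I → Conjunct Act τ) → Formula Act τ

/-- Delayed formulas `χ`: observations `⟨a⟩φ` (with `a ≠ τ`), standard
conjunctions `⋀Ψ`, stable conjunctions `⋀({¬⟨τ⟩⊤} ∪ Ψ)`, and branching
conjunctions `⋀({(α)φ} ∪ Ψ)`. -/
inductive DFormula (Act : Type) (τ : Act) : Type 1
  | obs : (a : Act) → a ≠ τ → Formula Act τ → DFormula Act τ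
  | conj : (I : Type) → (I → Conjunct Act τ) → DFormula Act τ
  | stableConj : (I : Type) → (I → Conjunct Act τ) → DFormula Act τ
  | branchConj : (α : Act) → Formula Act τ → (I : Type) → (I → Conjunct Act τ) → DFormula Act τ

/-- Conjuncts `ψ`: positive `⟨ε⟩χ` or negative `¬⟨ε⟩χ`. -/
inductive Conjunct (Act : Type) (τ : Act) : Type 1
  | pos : DFormula Act τ → Conjunct Act τ
  | neg : DFormula Act τ → Conjunct Act τ
end

section Semantics

variable {Proc Act : Type}

mutual
/-- Semantics `⟦φ⟧`. -/
def Sat (Tr : Proc → Act → Proc → Prop) (τ : Act) (p : Proc) : Formula Act τ → Prop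
  | .delayed χ => ∃ p', Star Tr τ p p' ∧ SatD Tr τ p' χ
  | .conj _ ps => ∀ i, SatC Tr τ p (ps i)

/-- Semantics `⟦χ⟧^ε` of delayed formulas. -/
def SatD (Tr : Proc → Act → Proc → Prop) (τ : Act) (p : Proc) : DFormula Act τ → Prop
  | .obs a _ φ => ∃ p', Tr p a p' ∧ Sat Tr τ p' φ
  | .conj _ ps => ∀ i, SatC Tr τ p (ps i)
  | .stableConj _ ps => Stable Tr τ p ∧ ∀ i, SatC Tr τ p (ps i)
  | .branchConj α φ _ ps =>
      (∃ p', OptStep Tr τ p α p' ∧ Sat Tr τ p' φ) ∧ ∀ i, SatC Tr τ p (ps i)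

/-- Semantics `⟦ψ⟧^∧` of conjuncts. -/
def SatC (Tr : Proc → Act → Proc → Prop) (τ : Act) (p : Proc) : Conjunct Act τ → Prop
  | .pos χ => ∃ p', Star Tr τ p p' ∧ SatD Tr τ p' χ
  | .neg χ => ¬ ∃ p', Star Tr τ p p' ∧ SatD Tr τ p' χ
end

/-- `φ` distinguishes `p` from the set `Q`. -/
def Distinguishes (Tr : Proc → Act → Proc → Prop) (τ : Act) (φ : Formula Act τ)
    (p : Proc) (Q : Set Proc) : Prop :=
  Sat Tr τ p φ ∧ ∀ q ∈ Q, ¬ Sat Tr τ q φ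

/-- The delayed formula `χ` distinguishes `p` from the set `Q` w.r.t. `⟦·⟧^ε`. -/
def DistinguishesD (Tr : Proc → Act → Proc → Prop) (τ : Act) (χ : DFormula Act τ)
    (p : Proc) (Q : Set Proc) : Prop :=
  SatD Tr τ p χ ∧ ∀ q ∈ Q, ¬ SatD Tr τ q χ

/-- The conjunct `ψ` distinguishes `p` from `q` w.r.t. `⟦·⟧^∧`. -/
def DistinguishesC (Tr : Proc → Act → Proc → Prop) (τ : Act) (ψ : Conjunct Act τ)
    (p q : Proc) : Prop :=
  SatC Tr τ p ψ ∧ ¬ SatC Tr τ q ψ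

/-- Stability-respecting branching bisimulations: symmetric relations with the
branching-bisimulation transfer property and the stability-respecting
property. -/
def IsSRBBisim (Tr : Proc → Act → Proc → Prop) (τ : Act) (R : Proc → Proc → Prop) : Prop :=
  Symmetric R ∧
  (∀ p q, R p q → ∀ α p', Tr p α p' →
    (α = τ ∧ R p' q) ∨
      ∃ q' q'', Star Tr τ q q' ∧ Tr q' α q'' ∧ R p q' ∧ R p' q'') ∧
  (∀ p q, R p q → Stable Tr τ p →
    ∃ q', Star Tr τ q q' ∧ Stable Tr τ q' ∧ R p q')

end Semantics

/-! ### Expressiveness prices -/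

section Expr

variable {Act : Type} {τ : Act}

mutual
/-- Expressiveness price `expr` of formulas. -/
def exprF : Formula Act τ → Energy
  | .delayed χ => exprE χ
  | .conj I ps => ⨆ _ : Nonempty I, ((unitE 4 + unitE 2) + ⨆ i, exprC (ps i))

/-- Expressiveness price `expr^ε` of delayed formulas. -/
def exprE : DFormula Act τ → Energy
  | .obs _ _ φ => unitE 0 + exprF φ
  | .conj I ps => ⨆ _ : Nonempty I, (unitE 2 + ⨆ i, exprC (ps i))
  | .stableConj _ ps => unitE 3 + ⨆ i, exprC (ps i)
  | .branchConj _ φ _ ps =>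
      (unitE 1 + unitE 2) +
        (((unitE 0 + exprF φ) ⊔ onlyAt 5 (1 + exprF φ 0)) ⊔ ⨆ i, exprC (ps i))

/-- Expressiveness price `expr^∧` of conjuncts. -/
def exprC : Conjunct Act τ → Energy
  | .pos χ => exprE χ ⊔ onlyAt 5 (exprE χ 0)
  | .neg χ => (unitE 7 + exprE χ) ⊔ onlyAt 6 (exprE χ 0)
end

end Expr

/-! ### The weak spectroscopy energy game -/

/-- Positions of the weak spectroscopy game. -/
inductive GPos (Proc Act : Type) : Type
  | att (p : Proc) (Q : Set Proc)                                 -- `[p,Q]_a`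
  | attD (p : Proc) (Q : Set Proc)                                -- `[p,Q]^ε_a`
  | attC (p q : Proc)                                             -- `[p,q]^∧_a`
  | attB (p : Proc) (Q : Set Proc)                                -- `[p,Q]^η_a`
  | defC (p : Proc) (Q : Set Proc)                                -- `(p,Q)_d`
  | defS (p : Proc) (Q : Set Proc)                                -- `(p,Q)^s_d`
  | defB (p : Proc) (α : Act) (p' : Proc) (Q Qa : Set Proc)       -- `(p,α,p',Q,Qa)^η_d`

/-- The zero update. -/
def zeroU : Update := fun _ => UpdComp.zero

/-- The update `-ê_i`. -/
def decU (i : Fin 8) : Update := fun k => if k = i then UpdComp.decr else UpdComp.zero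

/-- The update `(min_{1,6},0,0,0,0,0,0,0)`. -/
def minU16 : Update := fun k => if k = 0 then UpdComp.minWith {5} else UpdComp.zero

/-- The update `(min_{1,7},0,0,0,0,0,0,-1)`. -/
def minU17dec8 : Update := fun k =>
  if k = 0 then UpdComp.minWith {6} else if k = 7 then UpdComp.decr else UpdComp.zero

/-- The update `(0,-1,-1,0,0,0,0,0)`. -/
def dec23 : Update := fun k => if k = 1 ∨ k = 2 then UpdComp.decr else UpdComp.zero

/-- The update `(min_{1,6},-1,-1,0,0,0,0,0)`. -/
def minU16dec23 : Update := fun k =>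
  if k = 0 then UpdComp.minWith {5}
  else if k = 1 ∨ k = 2 then UpdComp.decr else UpdComp.zero

section Game

variable {Proc Act : Type}

/-- Moves of the weak spectroscopy game. -/
inductive GMove (Tr : Proc → Act → Proc → Prop) (τ : Act) :
    GPos Proc Act → Update → GPos Proc Act → Prop
  | delay {p : Proc} {Q Q' : Set Proc} :
      SetStar Tr τ Q Q' →
      GMove Tr τ (.att p Q) zeroU (.attD p Q')
  | procrastination {p p' : Proc} {Q : Set Proc} :
      Tr p τ p' → p ≠ p' →
      GMove Tr τ (.attD p Q) zeroU (.attD p' Q)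
  | observation {p p' : Proc} {a : Act} {Q Q' : Set Proc} :
      Tr p a p' → a ≠ τ → SetStep Tr Q a Q' →
      GMove Tr τ (.attD p Q) (decU 0) (.att p' Q')
  | finishing {p : Proc} :
      GMove Tr τ (.att p ∅) zeroU (.defC p ∅)
  | immediateConj {p : Proc} {Q : Set Proc} :
      Q ≠ ∅ →
      GMove Tr τ (.att p Q) (decU 4) (.defC p Q)
  | lateConj {p : Proc} {Q : Set Proc} :
      GMove Tr τ (.attD p Q) zeroU (.defC p Q)
  | conjAnswer {p q : Proc} {Q : Set Proc} :
      q ∈ Q →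
      GMove Tr τ (.defC p Q) (decU 2) (.attC p q)
  | posConjunct {p q : Proc} {Q : Set Proc} :
      SetStar Tr τ {q} Q →
      GMove Tr τ (.attC p q) minU16 (.attD p Q)
  | negConjunct {p q : Proc} {Q : Set Proc} :
      SetStar Tr τ {p} Q → p ≠ q →
      GMove Tr τ (.attC p q) minU17dec8 (.attD q Q)
  | stableConj {p : Proc} {Q : Set Proc} :
      Stable Tr τ p →
      GMove Tr τ (.attD p Q) zeroU (.defS p {q ∈ Q | Stable Tr τ q})
  | conjStableAnswer {p q : Proc} {Q : Set Proc} :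
      q ∈ Q →
      GMove Tr τ (.defS p Q) (decU 3) (.attC p q)
  | stableFinishing {p : Proc} :
      GMove Tr τ (.defS p ∅) (decU 3) (.defC p ∅)
  | branchConj {p p' : Proc} {α : Act} {Q Qa : Set Proc} :
      OptStep Tr τ p α p' → Qa ⊆ Q →
      GMove Tr τ (.attD p Q) zeroU (.defB p α p' (Q \ Qa) Qa)
  | branchAnswer {p p' q : Proc} {α : Act} {Q Qa : Set Proc} :
      q ∈ Q →
      GMove Tr τ (.defB p α p' Q Qa) dec23 (.attC p q)
  | branchObservation {p p' : Proc} {α : Act} {Q Qa Q' : Set Proc} :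
      SetOpt Tr τ Qa α Q' →
      GMove Tr τ (.defB p α p' Q Qa) minU16dec23 (.attB p' Q')
  | branchAccounting {p : Proc} {Q : Set Proc} :
      GMove Tr τ (.attB p Q) (decU 0) (.att p Q)

/-- Defender positions of the weak spectroscopy game. -/
def isDefender : GPos Proc Act → Prop
  | .defC _ _ => True
  | .defS _ _ => True
  | .defB _ _ _ _ _ => True
  | _ => False

/-- The weak spectroscopy energy game `G△`. -/
def specGame (Tr : Proc → Act → Proc → Prop) (τ : Act) : EGame (GPos Proc Act) where
  defender := isDefender
  move := GMove Tr τ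

end Game

/-! ### Strategy formulas -/

section Strat

variable {Proc Act : Type}

mutual
/-- Attacker strategy formulas (formula sort). -/
inductive StratF (Tr : Proc → Act → Proc → Prop) (τ : Act) :
    GPos Proc Act → Energy → Formula Act τ → Prop
  | delay {p : Proc} {Q Q' : Set Proc} {u : Update} {e e' : Energy} {χ : DFormula Act τ} :
      GMove Tr τ (.att p Q) u (.attD p Q') →
      upd e u = some e' →
      (specGame Tr τ).Win (.attD p Q') e' →
      StratD Tr τ (.attD p Q') e' χ →
      StratF Tr τ (.att p Q) e (.delayed χ)
  | immediateConj {p : Proc} {Q : Set Proc} {u : Update} {e e' : Energy}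
      {I : Type} {ps : I → Conjunct Act τ} :
      GMove Tr τ (.att p Q) u (.defC p Q) →
      upd e u = some e' →
      (specGame Tr τ).Win (.defC p Q) e' →
      StratD Tr τ (.defC p Q) e' (.conj I ps) →
      StratF Tr τ (.att p Q) e (.conj I ps)

/-- Attacker strategy formulas (delayed-formula sort). -/
inductive StratD (Tr : Proc → Act → Proc → Prop) (τ : Act) :
    GPos Proc Act → Energy → DFormula Act τ → Prop
  | procrastination {p p' : Proc} {Q : Set Proc} {u : Update} {e e' : Energy}
      {χ : DFormula Act τ} :
      GMove Tr τ (.attD p Q) u (.attD p' Q) →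
      upd e u = some e' →
      (specGame Tr τ).Win (.attD p' Q) e' →
      StratD Tr τ (.attD p' Q) e' χ →
      StratD Tr τ (.attD p Q) e χ
  | observation {p p' : Proc} {a : Act} {Q Q' : Set Proc} {u : Update} {e e' : Energy}
      {φ : Formula Act τ} (ha : a ≠ τ) :
      GMove Tr τ (.attD p Q) u (.att p' Q') →
      Tr p a p' → SetStep Tr Q a Q' →
      upd e u = some e' →
      (specGame Tr τ).Win (.att p' Q') e' →
      StratF Tr τ (.att p' Q') e' φ →
      StratD Tr τ (.attD p Q) e (.obs a ha φ)
  | lateConj {p : Proc} {Q : Set Proc} {u : Update} {e e' : Energy} {χ : DFormula Act τ} :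
      GMove Tr τ (.attD p Q) u (.defC p Q) →
      upd e u = some e' →
      (specGame Tr τ).Win (.defC p Q) e' →
      StratD Tr τ (.defC p Q) e' χ →
      StratD Tr τ (.attD p Q) e χ
  | stable {p : Proc} {Q Q' : Set Proc} {u : Update} {e e' : Energy} {χ : DFormula Act τ} :
      GMove Tr τ (.attD p Q) u (.defS p Q') →
      upd e u = some e' →
      (specGame Tr τ).Win (.defS p Q') e' →
      StratD Tr τ (.defS p Q') e' χ →
      StratD Tr τ (.attD p Q) e χ
  | branch {p p' : Proc} {α : Act} {Q Q' Qa : Set Proc} {u : Update} {e e' : Energy}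
      {χ : DFormula Act τ} :
      GMove Tr τ (.attD p Q) u (.defB p α p' Q' Qa) →
      upd e u = some e' →
      (specGame Tr τ).Win (.defB p α p' Q' Qa) e' →
      StratD Tr τ (.defB p α p' Q' Qa) e' χ →
      StratD Tr τ (.attD p Q) e χ
  | conj {p : Proc} {Q : Set Proc} {e : Energy}
      (us : {q // q ∈ Q} → Update) (es : {q // q ∈ Q} → Energy)
      (ψs : {q // q ∈ Q} → Conjunct Act τ) :
      (∀ qq : {q // q ∈ Q}, GMove Tr τ (.defC p Q) (us qq) (.attC p qq.1)) →
      (∀ qq : {q // q ∈ Q}, upd e (us qq) = some (es qq)) →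
      (∀ qq : {q // q ∈ Q}, (specGame Tr τ).Win (.attC p qq.1) (es qq)) →
      (∀ qq : {q // q ∈ Q}, StratC Tr τ (.attC p qq.1) (es qq) (ψs qq)) →
      StratD Tr τ (.defC p Q) e (.conj {q // q ∈ Q} ψs)
  | stableConj {p : Proc} {Q : Set Proc} {e : Energy}
      (hne : Q.Nonempty)
      (us : {q // q ∈ Q} → Update) (es : {q // q ∈ Q} → Energy)
      (ψs : {q // q ∈ Q} → Conjunct Act τ) :
      (∀ qq : {q // q ∈ Q}, GMove Tr τ (.defS p Q) (us qq) (.attC p qq.1)) →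
      (∀ qq : {q // q ∈ Q}, upd e (us qq) = some (es qq)) →
      (∀ qq : {q // q ∈ Q}, (specGame Tr τ).Win (.attC p qq.1) (es qq)) →
      (∀ qq : {q // q ∈ Q}, StratC Tr τ (.attC p qq.1) (es qq) (ψs qq)) →
      StratD Tr τ (.defS p Q) e (.stableConj {q // q ∈ Q} ψs)
  | stableFinish {p : Proc} {u : Update} {e e' : Energy} :
      GMove Tr τ (.defS p ∅) u (.defC p ∅) →
      upd e u = some e' →
      (specGame Tr τ).Win (.defC p (∅ : Set Proc)) e' →
      StratD Tr τ (.defS p ∅) e (.stableConj Empty fun x => x.elim)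
  | branchConj {p p' : Proc} {α : Act} {Q Qa Q' : Set Proc} {ua ua' : Update}
      {e e1 ea : Energy} {φa : Formula Act τ}
      (us : {q // q ∈ Q} → Update) (es : {q // q ∈ Q} → Energy)
      (ψs : {q // q ∈ Q} → Conjunct Act τ) :
      GMove Tr τ (.defB p α p' Q Qa) ua (.attB p' Q') →
      GMove Tr τ (.attB p' Q') ua' (.att p' Q') →
      upd e ua = some e1 →
      upd e1 ua' = some ea →
      (specGame Tr τ).Win (.att p' Q') ea →
      StratF Tr τ (.att p' Q') ea φa →
      (∀ qq : {q // q ∈ Q}, GMove Tr τ (.defB p α p' Q Qa) (us qq) (.attC p qq.1)) →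
      (∀ qq : {q // q ∈ Q}, upd e (us qq) = some (es qq)) →
      (∀ qq : {q // q ∈ Q}, (specGame Tr τ).Win (.attC p qq.1) (es qq)) →
      (∀ qq : {q // q ∈ Q}, StratC Tr τ (.attC p qq.1) (es qq) (ψs qq)) →
      StratD Tr τ (.defB p α p' Q Qa) e (.branchConj α φa {q // q ∈ Q} ψs)

/-- Attacker strategy formulas (conjunct sort). -/
inductive StratC (Tr : Proc → Act → Proc → Prop) (τ : Act) :
    GPos Proc Act → Energy → Conjunct Act τ → Prop
  | pos {p q : Proc} {Q' : Set Proc} {u : Update} {e e' : Energy} {χ : DFormula Act τ} :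
      GMove Tr τ (.attC p q) u (.attD p Q') →
      upd e u = some e' →
      (specGame Tr τ).Win (.attD p Q') e' →
      StratD Tr τ (.attD p Q') e' χ →
      StratC Tr τ (.attC p q) e (.pos χ)
  | neg {p q : Proc} {P' : Set Proc} {u : Update} {e e' : Energy} {χ : DFormula Act τ} :
      GMove Tr τ (.attC p q) u (.attD q P') →
      upd e u = some e' →
      (specGame Tr τ).Win (.attD q P') e' →
      StratD Tr τ (.attD q P') e' χ →
      StratC Tr τ (.attC p q) e (.neg χ)
end

end Strat


/-! The attacker plays the formula. Each constructor of HML_srbb has a matching move of `G△`: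
`⟨a⟩φ` is an observation, the three kinds of delayed conjunction are the late, stable and
branching conjunction moves, and positive and negative conjuncts are the moves of the same names.
The price of a constructor is exactly the energy its move and the defender's answers use up.
At a conjunction the defender picks some `q ∈ Q`, and the attacker answers with a conjunct that
`q` violates. Because winning budgets are upward closed, the supremum of the conjuncts' prices is
enough. The `τ`-steps in front of `⟨ε⟩χ` are taken by procrastination, which is free. -/

/-- `c.Covers e b k`: applying the component `c` at position `k` to `e` is defined there and
yields at least `b k`. -/
def UpdComp.Covers (e b : Energy) (k : Fin 8) : UpdComp → Prop
  | .decr => 1 + b k ≤ e k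
  | .zero => b k ≤ e k
  | .minWith D => ∀ d ∈ insert k D, b k ≤ e d

lemma exists_upd_ge {e b : Energy} {u : Update} (h : ∀ k, (u k).Covers e b k) :
    ∃ e', upd e u = some e' ∧ b ≤ e' := by
  have hdecr : ∀ k, u k = .decr → e k ≠ 0 := by
    intro k hk he
    have := h k
    rw [hk, UpdComp.Covers, he, nonpos_iff_eq_zero] at this
    simp at this
  refine ⟨_, if_pos hdecr, fun k => ?_⟩
  have hk := h k
  split
  next hu =>
    rw [hu, UpdComp.Covers] at hk
    exact (ENat.addLECancellable_of_ne_top ENat.one_ne_top).le_tsub_of_add_le_left hk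
  next hu => rwa [hu, UpdComp.Covers] at hk
  next D hu =>
    rw [hu, UpdComp.Covers] at hk
    exact Finset.le_inf hk

lemma covers_of_upd_eq_some {e e' f : Energy} {u : Update} (h : upd e u = some e')
    (hef : e ≤ f) (k : Fin 8) : (u k).Covers f e' k := by
  unfold upd at h
  split at h
  next hdecr =>
    obtain rfl := Option.some.inj h
    cases hu : u k with
    | decr =>
      simp only [UpdComp.Covers, hu]
      rw [add_tsub_cancel_of_le (Order.one_le_iff_ne_zero.mpr (hdecr k hu))]
      exact hef k
    | zero => simpa only [UpdComp.Covers, hu] using hef k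
    | minWith D =>
      simp only [UpdComp.Covers, hu]
      exact fun d hd => (Finset.inf_le hd).trans (hef d)
  next => exact absurd h nofun

lemma upd_mono {e e' f : Energy} {u : Update} (h : upd e u = some e') (hef : e ≤ f) :
    ∃ f', upd f u = some f' ∧ e' ≤ f' :=
  exists_upd_ge (covers_of_upd_eq_some h hef)

namespace EGame.Win

variable {Pos : Type} {G : EGame Pos} {g g' : Pos} {e b : Energy}

lemma mono {f : Energy} (h : G.Win g e) (hef : e ≤ f) : G.Win g f := by
  induction h generalizing f with
  | attack hd hm hu _ ih =>
    obtain ⟨f', hf', hle⟩ := upd_mono hu hef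
    exact .attack hd hm hf' (ih hle)
  | defend hd hdef _ ih =>
    refine .defend hd (fun u g' hm => ?_) (fun u g' f' hm hf' => ?_)
    · obtain ⟨e', he'⟩ := Option.ne_none_iff_exists'.mp (hdef u g' hm)
      obtain ⟨f', hf', -⟩ := upd_mono he' hef
      simp [hf']
    · obtain ⟨e', he'⟩ := Option.ne_none_iff_exists'.mp (hdef u g' hm)
      obtain ⟨f'', hf'', hle⟩ := upd_mono he' hef
      obtain rfl : f'' = f' := Option.some.inj (hf''.symm.trans hf')
      exact ih u g' e' hm he' hle

lemma of_move {u : Update} (hd : ¬ G.defender g) (hm : G.move g u g')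
    (hu : ∀ k, (u k).Covers e b k) (hw : G.Win g' b) : G.Win g e :=
  let ⟨_, he', hle⟩ := exists_upd_ge hu
  .attack hd hm he' (hw.mono hle)

lemma of_forall_move (hd : G.defender g)
    (h : ∀ u g', G.move g u g' → ∃ b, (∀ k, (u k).Covers e b k) ∧ G.Win g' b) :
    G.Win g e := by
  refine .defend hd (fun u g' hm => ?_) (fun u g' e' hm he' => ?_)
  · obtain ⟨b, hu, -⟩ := h u g' hm
    obtain ⟨e', he', -⟩ := exists_upd_ge hu
    simp [he']
  · obtain ⟨b, hu, hw⟩ := h u g' hm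
    obtain ⟨e'', he'', hle⟩ := exists_upd_ge hu
    obtain rfl : e'' = e' := Option.some.inj (he''.symm.trans he')
    exact hw.mono hle

end EGame.Win

section Updates

variable {e b : Energy}

lemma covers_zeroU (h : b ≤ e) (k : Fin 8) : (zeroU k).Covers e b k := h k

lemma covers_decU {i : Fin 8} (h : unitE i + b ≤ e) (k : Fin 8) : (decU i k).Covers e b k := by
  have := h k
  by_cases hk : k = i <;> simp_all [decU, unitE, UpdComp.Covers]

lemma covers_dec23 (h : unitE 1 + unitE 2 + b ≤ e) (k : Fin 8) : (dec23 k).Covers e b k := by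
  have := h k
  fin_cases k <;> simp_all [dec23, unitE, UpdComp.Covers]

lemma covers_minU16 (h : b ≤ e) (h5 : b 0 ≤ e 5) (k : Fin 8) : (minU16 k).Covers e b k := by
  have := h k
  fin_cases k <;> simp_all [minU16, UpdComp.Covers]

lemma covers_minU17dec8 (h : unitE 7 + b ≤ e) (h6 : b 0 ≤ e 6) (k : Fin 8) :
    (minU17dec8 k).Covers e b k := by
  have := h k
  fin_cases k <;> simp_all [minU17dec8, unitE, UpdComp.Covers]

lemma covers_minU16dec23 (h : unitE 1 + unitE 2 + b ≤ e) (h5 : b 0 ≤ e 5) (k : Fin 8) :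
    (minU16dec23 k).Covers e b k := by
  have := h k
  fin_cases k <;> simp_all [minU16dec23, unitE, UpdComp.Covers]

end Updates

section Moves

variable {Proc Act : Type} {Tr : Proc → Act → Proc → Prop} {τ : Act}
  {p p' q : Proc} {Q Qa : Set Proc} {α : Act} {e b M F : Energy}

open EGame.Win

lemma win_defC_empty : (specGame Tr τ).Win (.defC p ∅) e :=
  of_forall_move trivial fun _ _ hm => by
    cases hm with
    | conjAnswer hq => exact hq.elim

lemma win_att_empty : (specGame Tr τ).Win (.att p ∅) e :=
  of_move id .finishing (covers_zeroU le_rfl) win_defC_empty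

lemma win_attD_empty : (specGame Tr τ).Win (.attD p ∅) e :=
  of_move id .lateConj (covers_zeroU le_rfl) win_defC_empty

lemma win_att_of_delay (h : (specGame Tr τ).Win (.attD p {q' | ∃ q ∈ Q, Star Tr τ q q'}) e) :
    (specGame Tr τ).Win (.att p Q) e :=
  of_move id (.delay rfl) (covers_zeroU le_rfl) h

lemma win_attD_of_star (hs : Star Tr τ p p') (h : (specGame Tr τ).Win (.attD p' Q) e) :
    (specGame Tr τ).Win (.attD p Q) e := by
  induction hs using Relation.ReflTransGen.head_induction_on with
  | refl => exact h
  | @head p₀ p₁ hstep _ ih =>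
    by_cases hp : p₀ = p₁
    · rwa [hp]
    · exact of_move id (.procrastination hstep hp) (covers_zeroU le_rfl) ih

lemma win_attD_of_observation {a : Act} (hp : Tr p a p') (ha : a ≠ τ)
    (h : (specGame Tr τ).Win (.att p' {q' | ∃ q ∈ Q, Tr q a q'}) F) :
    (specGame Tr τ).Win (.attD p Q) (unitE 0 + F) :=
  of_move id (.observation hp ha rfl) (covers_decU le_rfl) h

lemma win_defC (h : ∀ q ∈ Q, (specGame Tr τ).Win (.attC p q) M) :
    (specGame Tr τ).Win (.defC p Q) (unitE 2 + M) :=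
  of_forall_move trivial fun _ _ hm => by
    cases hm with
    | conjAnswer hq => exact ⟨M, covers_decU le_rfl, h _ hq⟩

lemma win_att_of_immediateConj (hQ : Q ≠ ∅)
    (h : ∀ q ∈ Q, (specGame Tr τ).Win (.attC p q) M) :
    (specGame Tr τ).Win (.att p Q) (unitE 4 + unitE 2 + M) :=
  of_move id (.immediateConj hQ) (covers_decU (add_assoc _ _ _).ge) (win_defC h)

lemma win_attD_of_lateConj (h : ∀ q ∈ Q, (specGame Tr τ).Win (.attC p q) M) :
    (specGame Tr τ).Win (.attD p Q) (unitE 2 + M) :=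
  of_move id .lateConj (covers_zeroU le_rfl) (win_defC h)

lemma win_defS (h : ∀ q ∈ Q, (specGame Tr τ).Win (.attC p q) M) :
    (specGame Tr τ).Win (.defS p Q) (unitE 3 + M) :=
  of_forall_move trivial fun _ _ hm => by
    cases hm with
    | conjStableAnswer hq => exact ⟨M, covers_decU le_rfl, h _ hq⟩
    | stableFinishing => exact ⟨M, covers_decU le_rfl, win_defC_empty⟩

lemma win_attD_of_stableConj (hp : Stable Tr τ p)
    (h : ∀ q ∈ Q, Stable Tr τ q → (specGame Tr τ).Win (.attC p q) M) :
    (specGame Tr τ).Win (.attD p Q) (unitE 3 + M) :=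
  of_move id (.stableConj hp) (covers_zeroU le_rfl) (win_defS fun q hq => h q hq.1 hq.2)

lemma win_attB (h : (specGame Tr τ).Win (.att p Q) F) :
    (specGame Tr τ).Win (.attB p Q) (unitE 0 + F) :=
  of_move id .branchAccounting (covers_decU le_rfl) h

lemma win_defB (hM : ∀ q ∈ Q, (specGame Tr τ).Win (.attC p q) M)
    (hF : (specGame Tr τ).Win (.att p' {q' | ∃ q ∈ Qa, OptStep Tr τ q α q'}) F) :
    (specGame Tr τ).Win (.defB p α p' Q Qa)
      (unitE 1 + unitE 2 + ((unitE 0 + F) ⊔ onlyAt 5 (1 + F 0) ⊔ M)) :=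
  of_forall_move trivial fun _ _ hm => by
    cases hm with
    | branchAnswer hq => exact ⟨M, covers_dec23 (add_le_add le_rfl le_sup_right), hM _ hq⟩
    | branchObservation hQ' =>
      subst hQ'
      refine ⟨unitE 0 + F,
        covers_minU16dec23 (add_le_add le_rfl (le_sup_left.trans le_sup_left)) ?_, win_attB hF⟩
      simp [unitE, onlyAt]

lemma win_attD_of_branchConj (hp : OptStep Tr τ p α p') (hQa : Qa ⊆ Q)
    (hM : ∀ q ∈ Q \ Qa, (specGame Tr τ).Win (.attC p q) M)
    (hF : (specGame Tr τ).Win (.att p' {q' | ∃ q ∈ Qa, OptStep Tr τ q α q'}) F) :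
    (specGame Tr τ).Win (.attD p Q)
      (unitE 1 + unitE 2 + ((unitE 0 + F) ⊔ onlyAt 5 (1 + F 0) ⊔ M)) :=
  of_move id (.branchConj hp hQa) (covers_zeroU le_rfl) (win_defB hM hF)

lemma win_attC_of_pos (h : (specGame Tr τ).Win (.attD p {q' | Star Tr τ q q'}) b) :
    (specGame Tr τ).Win (.attC p q) (b ⊔ onlyAt 5 (b 0)) :=
  of_move id (.posConjunct (Set.ext fun _ => by simp))
    (covers_minU16 le_sup_left (by simp [onlyAt])) h

lemma win_attC_of_neg (hpq : p ≠ q)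
    (h : (specGame Tr τ).Win (.attD q {p' | Star Tr τ p p'}) b) :
    (specGame Tr τ).Win (.attC p q) ((unitE 7 + b) ⊔ onlyAt 6 (b 0)) :=
  of_move id (.negConjunct (Set.ext fun _ => by simp) hpq)
    (covers_minU17dec8 le_sup_left (by simp [onlyAt])) h

end Moves

section Distinction

variable {Proc Act : Type} {Tr : Proc → Act → Proc → Prop} {τ : Act}

lemma win_attC_iSup {ι : Type} {ψs : ι → Conjunct Act τ} {p q : Proc}
    (ih : ∀ i, DistinguishesC Tr τ (ψs i) p q →
      (specGame Tr τ).Win (.attC p q) (exprC (ψs i)))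
    (hp : ∀ i, SatC Tr τ p (ψs i)) (hq : ¬ ∀ i, SatC Tr τ q (ψs i)) :
    (specGame Tr τ).Win (.attC p q) (⨆ i, exprC (ψs i)) :=
  let ⟨i, hi⟩ := not_forall.mp hq
  (ih i ⟨hp i, hi⟩).mono (le_iSup (fun i => exprC (ψs i)) i)

mutual

theorem win_att_of_distinguishes (φ : Formula Act τ) (p : Proc) (Q : Set Proc)
    (h : Distinguishes Tr τ φ p Q) : (specGame Tr τ).Win (.att p Q) (exprF φ) := by
  match φ, h with
  | .delayed χ, ⟨⟨p', hpp', hp'⟩, hQ⟩ =>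
    rw [exprF]
    refine win_att_of_delay <| win_attD_of_star hpp' <|
      win_attD_of_distinguishesD χ p' _ ⟨hp', ?_⟩
    rintro q' ⟨q, hq, hqq'⟩ hq'
    exact hQ q hq (by rw [Sat]; exact ⟨q', hqq', hq'⟩)
  | .conj I ψs, ⟨hp, hQ⟩ =>
    rcases Q.eq_empty_or_nonempty with rfl | ⟨q₀, hq₀⟩
    · exact win_att_empty
    rw [Sat] at hp
    simp only [Sat, not_forall] at hQ
    rw [exprF, iSup_pos (hQ q₀ hq₀).nonempty]
    exact win_att_of_immediateConj (Set.nonempty_iff_ne_empty.mp ⟨q₀, hq₀⟩) fun q hq =>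
      win_attC_iSup (fun i => win_attC_of_distinguishesC (ψs i) p q) hp (not_forall.mpr (hQ q hq))

theorem win_attD_of_distinguishesD (χ : DFormula Act τ) (p : Proc) (Q : Set Proc)
    (h : DistinguishesD Tr τ χ p Q) : (specGame Tr τ).Win (.attD p Q) (exprE χ) := by
  obtain ⟨hp, hQ⟩ := h
  match χ with
  | .obs a ha φ =>
    rw [SatD] at hp
    obtain ⟨p', hpp', hp'⟩ := hp
    rw [exprE]
    refine win_attD_of_observation hpp' ha (win_att_of_distinguishes φ p' _ ⟨hp', ?_⟩)
    rintro q' ⟨q, hq, hqq'⟩ hq'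
    exact hQ q hq (by rw [SatD]; exact ⟨q', hqq', hq'⟩)
  | .conj I ψs =>
    rcases Q.eq_empty_or_nonempty with rfl | ⟨q₀, hq₀⟩
    · exact win_attD_empty
    rw [SatD] at hp
    simp only [SatD, not_forall] at hQ
    rw [exprE, iSup_pos (hQ q₀ hq₀).nonempty]
    exact win_attD_of_lateConj fun q hq =>
      win_attC_iSup (fun i => win_attC_of_distinguishesC (ψs i) p q) hp (not_forall.mpr (hQ q hq))
  | .stableConj I ψs =>
    rw [SatD] at hp
    rw [exprE]
    refine win_attD_of_stableConj hp.1 fun q hq hqs =>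
      win_attC_iSup (fun i => win_attC_of_distinguishesC (ψs i) p q) hp.2 fun hqψ => ?_
    exact hQ q hq (by rw [SatD]; exact ⟨hqs, hqψ⟩)
  | .branchConj α φ I ψs =>
    rw [SatD] at hp
    obtain ⟨⟨p', hpp', hp'⟩, hpψ⟩ := hp
    rw [exprE]
    -- `Qa` collects the `q` that fail the branch `(α)φ`; every other `q` fails some `ψᵢ`.
    refine win_attD_of_branchConj
      (Qa := {q ∈ Q | ¬ ∃ q', OptStep Tr τ q α q' ∧ Sat Tr τ q' φ}) hpp'
      (Set.sep_subset _ _) (fun q hq => ?_) (win_att_of_distinguishes φ p' _ ⟨hp', ?_⟩)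
    · refine win_attC_iSup (fun i => win_attC_of_distinguishesC (ψs i) p q) hpψ fun hqψ => ?_
      exact hQ q hq.1 (by rw [SatD]; exact ⟨not_not.mp fun h => hq.2 ⟨hq.1, h⟩, hqψ⟩)
    · rintro q' ⟨q, hq, hqq'⟩ hq'
      exact hq.2 ⟨q', hqq', hq'⟩

theorem win_attC_of_distinguishesC (ψ : Conjunct Act τ) (p q : Proc)
    (h : DistinguishesC Tr τ ψ p q) : (specGame Tr τ).Win (.attC p q) (exprC ψ) := by
  obtain ⟨hp, hq⟩ := h
  match ψ with
  | .pos χ =>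
    rw [SatC] at hp hq
    obtain ⟨p', hpp', hp'⟩ := hp
    rw [exprC]
    exact win_attC_of_pos (win_attD_of_star hpp' (win_attD_of_distinguishesD χ p' _
      ⟨hp', fun q' hqq' hq' => hq ⟨q', hqq', hq'⟩⟩))
  | .neg χ =>
    rw [SatC] at hp hq
    obtain ⟨q', hqq', hq'⟩ := not_not.mp hq
    rw [exprC]
    exact win_attC_of_neg (by rintro rfl; exact hp ⟨q', hqq', hq'⟩)
      (win_attD_of_star hqq' (win_attD_of_distinguishesD χ q' _
        ⟨hq', fun p' hpp' hp' => hp ⟨p', hpp', hp'⟩⟩))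

end

end Distinction

/-- if the delayed formula `χ` distinguishes `p` from a nonempty
`Q` closed under `↠`, then `expr^ε(χ)` is attacker-winning at `[p,Q]^ε_a`. -/
theorem distinction_price_in_win_delayed {Proc Act : Type} (Tr : Proc → Act → Proc → Prop)
    (τ : Act) (χ : DFormula Act τ) (p : Proc) (Q : Set Proc)
    (hQ : Q.Nonempty) (hcl : SetStar Tr τ Q Q)
    (h : DistinguishesD Tr τ χ p Q) :
    (specGame Tr τ).Win (.attD p Q) (exprE χ) :=
  win_attD_of_distinguishesD χ p Q h

end Spectroscopy
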